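/- With the inverse-probability-weighted local models (e(k)/p_k)·w_k, the expectation over N-element subsets S and Bernoulli functions e of ‖Σ_{k∈S} ((e(k)/p_k)·w_k − w_k)‖² is at most (N²/K) · Σ_{k=1}^K ((1−p_k)/p_k) · ‖w_k‖²; consequently, if ‖w_k‖ ≤ G for all k, it is at most (N²/K) · G² · Σ_{k=1}^K (1−p_k)/p_k. -/

import Mathlib

open Finset

lemma card_filter_mem_powersetCard {K N : ℕ} (hN1 : 1 ≤ N) (k : Fin K) :
    ((Finset.powersetCard N (Finset.univ : Finset (Fin K))).filter (fun S => k ∈ S)).card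
      = Nat.choose (K - 1) (N - 1) := by
  have h : ((Finset.powersetCard N (Finset.univ : Finset (Fin K))).filter (fun S => k ∈ S)).card
      = (Finset.powersetCard (N - 1) ((Finset.univ : Finset (Fin K)).erase k)).card := by
    apply Finset.card_bij (fun S _ => S.erase k)
    · intro S hS
      simp only [mem_filter, mem_powersetCard] at hS
      simp only [mem_powersetCard]
      refine ⟨fun x hx => ?_, ?_⟩
      · simp only [mem_erase] at hx ⊢; exact ⟨hx.1, mem_univ _⟩
      · rw [Finset.card_erase_of_mem hS.2, hS.1.2]
    · intro S hS T hT h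
      simp only [mem_filter] at hS hT
      rw [← Finset.insert_erase hS.2, ← Finset.insert_erase hT.2, h]
    · intro T hT
      simp only [mem_powersetCard] at hT
      have hkT : k ∉ T := fun h => absurd (hT.1 h) (by simp)
      refine ⟨insert k T, ?_, Finset.erase_insert hkT⟩
      simp only [mem_filter, mem_powersetCard]
      refine ⟨⟨fun x _ => mem_univ x, ?_⟩, mem_insert_self _ _⟩
      rw [Finset.card_insert_of_notMem hkT, hT.2]
      omega
  rw [h, Finset.card_powersetCard, Finset.card_erase_of_mem (mem_univ k), card_univ,
    Fintype.card_fin]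

lemma sum_pi_bool_marginal {K : ℕ} (q : Fin K → Bool → ℝ)
    (hq : ∀ j, q j true + q j false = 1) (k : Fin K) (g : Bool → ℝ) :
    ∑ e : Fin K → Bool, (∏ j, q j (e j)) * g (e k)
      = q k true * g true + q k false * g false := by
  have h1 : ∀ e : Fin K → Bool, (∏ j, q j (e j)) * g (e k)
      = ∏ j, (q j (e j) * if j = k then g (e j) else 1) := by
    intro e
    rw [Finset.prod_mul_distrib]
    congr 1
    simp
  simp_rw [h1]
  rw [← Fintype.prod_sum (fun j b => q j b * if j = k then g b else 1)]
  rw [Finset.prod_eq_single k]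
  · simp
  · intro j _ hj
    simp [hj, hq j]
  · simp

/-- Bound on C₁ in Appendix B: expected squared norm of the deviation of the
inverse-probability-weighted local models `(e(k)/p_k)·w_k` from `w_k`, summed
over a random `N`-element subset. -/
theorem dds_deviation_bound
    {V : Type*} [NormedAddCommGroup V] [InnerProductSpace ℝ V]
    (K N : ℕ) (hK : 1 ≤ K) (hN1 : 1 ≤ N) (hNK : N ≤ K)
    (ws : Fin K → V) (p : Fin K → ℝ)
    (hp : ∀ k, 0 < p k ∧ p k ≤ 1) (G : ℝ) (hG : 0 ≤ G) :
    (1 / (Nat.choose K N : ℝ)) *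
      ∑ S ∈ Finset.powersetCard N (Finset.univ : Finset (Fin K)),
        ∑ e : Fin K → Bool,
          (∏ k, if e k then p k else 1 - p k) *
            ‖∑ k ∈ S, ((if e k then (1 / p k) • ws k else 0) - ws k)‖ ^ 2
      ≤ ((N : ℝ) ^ 2 / (K : ℝ)) * ∑ k, ((1 - p k) / p k) * ‖ws k‖ ^ 2
    ∧ ((∀ k, ‖ws k‖ ≤ G) →
      (1 / (Nat.choose K N : ℝ)) *
        ∑ S ∈ Finset.powersetCard N (Finset.univ : Finset (Fin K)),
          ∑ e : Fin K → Bool,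
            (∏ k, if e k then p k else 1 - p k) *
              ‖∑ k ∈ S, ((if e k then (1 / p k) • ws k else 0) - ws k)‖ ^ 2
        ≤ ((N : ℝ) ^ 2 / (K : ℝ)) * G ^ 2 * ∑ k, (1 - p k) / p k) := by
  have hp0 : ∀ k, (0:ℝ) < p k := fun k => (hp k).1
  have hC : (0:ℝ) < (Nat.choose K N : ℝ) := by
    exact_mod_cast Nat.choose_pos hNK
  set c : Fin K → ℝ := fun k => ((1 - p k) / p k) * ‖ws k‖ ^ 2 with hc
  have hcnn : ∀ k, 0 ≤ c k := by
    intro k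
    have : 0 ≤ (1 - p k) / p k := div_nonneg (by linarith [(hp k).2]) (hp0 k).le
    positivity
  have hPnn : ∀ e : Fin K → Bool, (0:ℝ) ≤ ∏ k, if e k then p k else 1 - p k := by
    intro e
    apply Finset.prod_nonneg
    intro j _
    split
    · exact (hp0 j).le
    · linarith [(hp j).2]
  -- pointwise expectation
  have hexp : ∀ k : Fin K,
      ∑ e : Fin K → Bool, (∏ j, if e j then p j else 1 - p j) *
        ‖(if e k then (1 / p k) • ws k else 0) - ws k‖ ^ 2 = c k := by
    intro k
    have := sum_pi_bool_marginal (fun j b => if b then p j else 1 - p j)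
      (fun j => by simp) k
      (fun b => ‖(if b then (1 / p k) • ws k else 0) - ws k‖ ^ 2)
    rw [this]
    have h1 : (1 / p k) • ws k - ws k = (1 / p k - 1) • ws k := by
      rw [sub_smul, one_smul]
    simp only [Bool.false_eq_true, if_false, if_true]
    rw [h1, zero_sub, norm_neg, norm_smul, Real.norm_eq_abs, mul_pow, sq_abs, hc]
    have hpk := hp0 k
    field_simp
    ring
  -- per-subset bound
  have hSbound : ∀ S ∈ Finset.powersetCard N (Finset.univ : Finset (Fin K)),
      ∑ e : Fin K → Bool, (∏ j, if e j then p j else 1 - p j) *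
        ‖∑ k ∈ S, ((if e k then (1 / p k) • ws k else 0) - ws k)‖ ^ 2
      ≤ (N:ℝ) * ∑ k ∈ S, c k := by
    intro S hS
    have hcard : S.card = N := (Finset.mem_powersetCard.mp hS).2
    calc ∑ e : Fin K → Bool, (∏ j, if e j then p j else 1 - p j) *
          ‖∑ k ∈ S, ((if e k then (1 / p k) • ws k else 0) - ws k)‖ ^ 2
        ≤ ∑ e : Fin K → Bool, (∏ j, if e j then p j else 1 - p j) *
          ((N:ℝ) * ∑ k ∈ S, ‖(if e k then (1 / p k) • ws k else 0) - ws k‖ ^ 2) := by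
          apply Finset.sum_le_sum
          intro e _
          apply mul_le_mul_of_nonneg_left _ (hPnn e)
          calc ‖∑ k ∈ S, ((if e k then (1 / p k) • ws k else 0) - ws k)‖ ^ 2
              ≤ (∑ k ∈ S, ‖(if e k then (1 / p k) • ws k else 0) - ws k‖) ^ 2 := by
                apply pow_le_pow_left₀ (norm_nonneg _) (norm_sum_le _ _)
            _ ≤ (S.card : ℝ) * ∑ k ∈ S, ‖(if e k then (1 / p k) • ws k else 0) - ws k‖ ^ 2 :=
                sq_sum_le_card_mul_sum_sq
            _ = (N:ℝ) * ∑ k ∈ S, ‖(if e k then (1 / p k) • ws k else 0) - ws k‖ ^ 2 := by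
                rw [hcard]
      _ = (N:ℝ) * ∑ k ∈ S, ∑ e : Fin K → Bool, (∏ j, if e j then p j else 1 - p j) *
          ‖(if e k then (1 / p k) • ws k else 0) - ws k‖ ^ 2 := by
          simp_rw [mul_left_comm, ← Finset.mul_sum]
          congr 1
          rw [Finset.sum_comm]
          congr 1
          ext e
          rw [Finset.mul_sum]
      _ = (N:ℝ) * ∑ k ∈ S, c k := by
          congr 1
          exact Finset.sum_congr rfl fun k _ => hexp k
  -- counting identity
  have hsum : ∑ S ∈ Finset.powersetCard N (Finset.univ : Finset (Fin K)), ∑ k ∈ S, c k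
      = (Nat.choose (K - 1) (N - 1) : ℝ) * ∑ k, c k := by
    have h1 : ∀ S : Finset (Fin K), ∑ k ∈ S, c k = ∑ k, if k ∈ S then c k else 0 := by
      intro S
      rw [Finset.sum_ite_mem, Finset.univ_inter]
    simp_rw [h1]
    rw [Finset.sum_comm, Finset.mul_sum]
    apply Finset.sum_congr rfl
    intro k _
    rw [← Finset.sum_filter, Finset.sum_const, card_filter_mem_powersetCard hN1 k,
      nsmul_eq_mul]
    simp
  have hnat : (K:ℝ) * (Nat.choose (K - 1) (N - 1) : ℝ) = (Nat.choose K N : ℝ) * N := by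
    have := Nat.add_one_mul_choose_eq (K - 1) (N - 1)
    have e1 : K - 1 + 1 = K := by omega
    have e2 : N - 1 + 1 = N := by omega
    rw [e1, e2] at this
    exact_mod_cast this
  have hK0 : (0:ℝ) < (K:ℝ) := by exact_mod_cast hK
  have key : (1 / (Nat.choose K N : ℝ)) *
      ∑ S ∈ Finset.powersetCard N (Finset.univ : Finset (Fin K)),
        ∑ e : Fin K → Bool,
          (∏ k, if e k then p k else 1 - p k) *
            ‖∑ k ∈ S, ((if e k then (1 / p k) • ws k else 0) - ws k)‖ ^ 2
      ≤ ((N : ℝ) ^ 2 / (K : ℝ)) * ∑ k, c k := by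
    have h2 : (1 / (Nat.choose K N : ℝ)) *
        ∑ S ∈ Finset.powersetCard N (Finset.univ : Finset (Fin K)),
          ∑ e : Fin K → Bool,
            (∏ k, if e k then p k else 1 - p k) *
              ‖∑ k ∈ S, ((if e k then (1 / p k) • ws k else 0) - ws k)‖ ^ 2
        ≤ (1 / (Nat.choose K N : ℝ)) *
          ∑ S ∈ Finset.powersetCard N (Finset.univ : Finset (Fin K)), (N:ℝ) * ∑ k ∈ S, c k := by
      apply mul_le_mul_of_nonneg_left _ (by positivity)
      exact Finset.sum_le_sum hSbound
    refine h2.trans_eq ?_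
    rw [← Finset.mul_sum, hsum]
    field_simp
    linear_combination (∑ k, c k) * hnat
  refine ⟨key, fun hGw => ?_⟩
  refine key.trans ?_
  rw [mul_assoc]
  apply mul_le_mul_of_nonneg_left _ (by positivity)
  rw [Finset.mul_sum]
  apply Finset.sum_le_sum
  intro k _
  simp only [hc]
  calc (1 - p k) / p k * ‖ws k‖ ^ 2 ≤ (1 - p k) / p k * G ^ 2 := by
        apply mul_le_mul_of_nonneg_left _ (div_nonneg (by linarith [(hp k).2]) (hp0 k).le)
        exact pow_le_pow_left₀ (norm_nonneg _) (hGw k) 2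
    _ = G ^ 2 * ((1 - p k) / p k) := mul_comm _ _
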